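/- arXiv:1805.03811 — 2 statements merged into one kernel-verified Lean document; each statement's English description precedes it below -/
import Mathlib

section
/- Let λ, μ be real numbers with μ > 0 and λ + μ > 0. Let ξ¹, ξ² ∈ ℝ³ be unit vectors, and let τ¹, τ² ∈ ℝ satisfy (τ¹)² = λ + 2μ, (τ²)² = μ, and τ¹τ² = √(μ(λ + 2μ)). Then √(μ(λ + 2μ)) − μ(ξ¹·ξ²) > 0, and there is exactly one b ∈ ℝ with (τ¹ + bτ²)² = μ·|ξ¹ + bξ²|², namely b = −(λ + μ)/(2(√(μ(λ + 2μ)) − μ(ξ¹·ξ²))); this b is negative, in particular nonzero. (A P–S interaction produces exactly one S-characteristic combination, and it is a genuinely new covector.) -/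
/-!
Expanding `(τ1 + b τ2)² - μ |ξ1 + b ξ2|²` with the normalisations of `τ1, τ2, ξ1, ξ2`, the
quadratic terms `b² τ2²` and `b² μ |ξ2|²` cancel, so the S-characteristic condition is the
*linear* equation `(λ + μ) + 2 b (√(μ(λ + 2μ)) - μ ξ1·ξ2) = 0`. Its coefficient is positive because
`ξ1·ξ2 ≤ 1` (Cauchy–Schwarz) and `μ < √(μ(λ + 2μ))`, so the equation has exactly one root,
and that root is negative since `λ + μ > 0`.
-/

/-- Euclidean dot product on ℝ³. -/
def dot (x y : Fin 3 → ℝ) : ℝ := ∑ i, x i * y i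

lemma dot_add_smul_self (x y : Fin 3 → ℝ) (b : ℝ) :
    dot (x + b • y) (x + b • y) = dot x x + 2 * b * dot x y + b ^ 2 * dot y y := by
  simp only [dot, Pi.add_apply, Pi.smul_apply, smul_eq_mul, Finset.mul_sum,
    ← Finset.sum_add_distrib]
  exact Finset.sum_congr rfl fun i _ => by ring

lemma dot_sq_le_dot_self_mul_dot_self (x y : Fin 3 → ℝ) :
    dot x y ^ 2 ≤ dot x x * dot y y := by
  simpa only [dot, sq] using Finset.sum_mul_sq_le_sq_mul_sq Finset.univ x y

lemma dot_le_one_of_dot_self_eq_one {x y : Fin 3 → ℝ} (hx : dot x x = 1) (hy : dot y y = 1) :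
    dot x y ≤ 1 := by
  have h := dot_sq_le_dot_self_mul_dot_self x y
  rw [hx, hy, one_mul] at h
  exact (abs_le.mp ((sq_le_one_iff_abs_le_one _).mp h)).2

lemma lt_sqrt_mul_add_two_mul {lam mu : ℝ} (hmu : 0 < mu) (hlm : 0 < lam + mu) :
    mu < Real.sqrt (mu * (lam + 2 * mu)) :=
  Real.lt_sqrt_of_sq_lt (by nlinarith)

lemma sq_add_mul_sub_mul_dot_add_smul_self {lam mu τ1 τ2 : ℝ} {ξ1 ξ2 : Fin 3 → ℝ}
    (hξ1 : dot ξ1 ξ1 = 1) (hξ2 : dot ξ2 ξ2 = 1) (hτ1 : τ1 ^ 2 = lam + 2 * mu)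
    (hτ2 : τ2 ^ 2 = mu) (hτ12 : τ1 * τ2 = Real.sqrt (mu * (lam + 2 * mu))) (b : ℝ) :
    (τ1 + b * τ2) ^ 2 - mu * dot (ξ1 + b • ξ2) (ξ1 + b • ξ2) =
      (lam + mu) + 2 * b * (Real.sqrt (mu * (lam + 2 * mu)) - mu * dot ξ1 ξ2) := by
  rw [dot_add_smul_self, hξ1, hξ2, ← hτ12]
  linear_combination hτ1 + b ^ 2 * hτ2

/-- A P–S interaction produces exactly one S-characteristic combination, and it is
a genuinely new (negative-coefficient) covector. -/
theorem ps_interaction_unique_S (lam mu : ℝ) (hmu : 0 < mu) (hlm : 0 < lam + mu)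
    (ξ1 ξ2 : Fin 3 → ℝ) (hξ1 : dot ξ1 ξ1 = 1) (hξ2 : dot ξ2 ξ2 = 1)
    (τ1 τ2 : ℝ) (hτ1 : τ1 ^ 2 = lam + 2 * mu) (hτ2 : τ2 ^ 2 = mu)
    (hτ12 : τ1 * τ2 = Real.sqrt (mu * (lam + 2 * mu))) :
    0 < Real.sqrt (mu * (lam + 2 * mu)) - mu * dot ξ1 ξ2 ∧
    (-(lam + mu) / (2 * (Real.sqrt (mu * (lam + 2 * mu)) - mu * dot ξ1 ξ2)) < 0) ∧
    ∀ b : ℝ,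
      (τ1 + b * τ2) ^ 2 = mu * dot (ξ1 + b • ξ2) (ξ1 + b • ξ2) ↔
      b = -(lam + mu) / (2 * (Real.sqrt (mu * (lam + 2 * mu)) - mu * dot ξ1 ξ2)) := by
  have hd := dot_le_one_of_dot_self_eq_one hξ1 hξ2
  have hs := lt_sqrt_mul_add_two_mul hmu hlm
  have hpos : 0 < Real.sqrt (mu * (lam + 2 * mu)) - mu * dot ξ1 ξ2 := by nlinarith
  refine ⟨hpos, div_neg_of_neg_of_pos (by linarith) (by linarith), fun b => ?_⟩
  rw [eq_div_iff (by positivity), ← sub_eq_zero,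
    sq_add_mul_sub_mul_dot_add_smul_self hξ1 hξ2 hτ1 hτ2 hτ12]
  constructor <;> intro h <;> linarith
end

section
/- Let λ, μ, A, B be real numbers, let ξ¹, ξ² ∈ ℝ³ be linearly independent, set ξ^S = ξ¹ + ξ², and let h(w, p) be the P–S interaction symbol scalar. Let p ∈ ℝ³ be a unit vector in the plane spanned by ξ¹ and ξ² with p·ξ² = 0 and p·ξ^S ≥ 0, and let w ∈ ℝ³ be a unit vector in the plane spanned by ξ¹ and ξ² with w·ξ^S = 0 and w·ξ¹ ≥ 0. Define ψ = arccos((ξ^S·ξ²)/(|ξ^S||ξ²|)). Then h(w, p) = |ξ¹|²·|ξ²|·|ξ^S|·[(λ + 2μ + B + A/2)·cos²ψ − (μ + B + A/2)·sin²ψ]. (The SH→SH component of the symbol generated by the interaction of a P wave and an in-plane polarized S wave; it is generically nonvanishing exactly when λ + 2μ + B + A/2 ≠ 0 or μ + B + A/2 ≠ 0.) -/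
open Real

/-- Euclidean norm on ℝ³. -/
noncomputable def nrm (x : Fin 3 → ℝ) : ℝ := Real.sqrt (dot x x)

/-- The P–S interaction symbol scalar h(w, p) for a P wave with covector ξ¹ and an
S wave with covector ξ² and polarization p, tested in output direction w. -/
noncomputable def hPS (lam mu A B : ℝ) (ξ1 ξ2 w p : Fin 3 → ℝ) : ℝ :=
  lam * (dot ξ1 ξ1 * dot w p * dot ξ2 (ξ1 + ξ2)
      + dot ξ1 p * dot ξ1 ξ2 * dot w (ξ1 + ξ2))
    + 2 * mu * (dot w p * dot ξ1 ξ2 * dot ξ1 (ξ1 + ξ2))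
    + mu * (dot ξ1 w * dot ξ1 p * dot ξ2 (ξ1 + ξ2))
    + mu * (dot ξ1 w * dot ξ1 ξ2 * dot p (ξ1 + ξ2)
      + dot ξ1 w * dot ξ1 p * dot ξ2 (ξ1 + ξ2)
      + dot ξ2 w * dot ξ1 p * dot ξ1 (ξ1 + ξ2))
    + (A / 2) * (dot ξ1 w * dot ξ1 ξ2 * dot p (ξ1 + ξ2)
      + dot ξ1 w * dot ξ1 p * dot ξ2 (ξ1 + ξ2)
      + dot p w * dot ξ1 ξ2 * dot ξ1 (ξ1 + ξ2)
      + dot ξ2 w * dot p ξ1 * dot ξ1 (ξ1 + ξ2))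
    + B * (dot ξ1 ξ1 * dot w p * dot ξ2 (ξ1 + ξ2)
      + dot ξ1 ξ1 * dot p (ξ1 + ξ2) * dot ξ2 w
      + 2 * dot ξ1 p * dot ξ1 ξ2 * dot w (ξ1 + ξ2))

/-!
Everything happens in the plane of `ξ¹, ξ²`. Once `p·ξ² = 0` and `w·ξ^S = 0` are used, `h(w, p)`
depends on `p` and `w` only through `p·w` and `(w·ξ¹)(p·ξ¹)`. A vector `p` of the plane of `u, v`
with `p·v = 0` is a multiple of `|v|² u - (u·v) v`, so with the Gram determinant
`D = |u|²|v|² - (u·v)²` we get `D (p·x) = (p·u)(|v|² (u·x) - (u·v)(v·x))` for every `x`.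
Applied to `p ⊥ ξ²` and to `w ⊥ ξ^S` (the pair `ξ¹, ξ^S` has the same Gram determinant as
`ξ¹, ξ²`), with the sign conditions choosing the square roots, this gives
`|ξ²| (p·ξ¹) = |ξ^S| (w·ξ¹) = √D` and `p·w = cos ψ`, hence `(w·ξ¹)(p·ξ¹) = |ξ^S||ξ²| sin² ψ`.
What remains is a polynomial identity.
-/

theorem Submodule.mem_span_pair_self_add {R M : Type*} [Ring R] [AddCommGroup M] [Module R M]
    {x y z : M} (h : z ∈ span R {x, y}) : z ∈ span R {x, x + y} := by
  obtain ⟨a, b, rfl⟩ := mem_span_pair.mp h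
  exact mem_span_pair.mpr ⟨a - b, b, by rw [sub_smul, smul_add]; abel⟩

section GramDet

variable {ι R : Type*} [Fintype ι]

def gramDet [CommRing R] (u v : ι → R) : R := u ⬝ᵥ u * (v ⬝ᵥ v) - (u ⬝ᵥ v) ^ 2

section CommRing

variable [CommRing R]

theorem gramDet_add_right (u v : ι → R) : gramDet u (u + v) = gramDet u v := by
  simp only [gramDet, add_dotProduct, dotProduct_add, dotProduct_comm v u]
  ring

theorem gramDet_mul_dotProduct_of_mem_span_pair {u v p : ι → R}
    (hp : p ∈ Submodule.span R {u, v}) (hpv : p ⬝ᵥ v = 0) (x : ι → R) :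
    gramDet u v * (p ⬝ᵥ x) = p ⬝ᵥ u * (v ⬝ᵥ v * (u ⬝ᵥ x) - u ⬝ᵥ v * (v ⬝ᵥ x)) := by
  obtain ⟨α, β, rfl⟩ := Submodule.mem_span_pair.mp hp
  simp only [gramDet, add_dotProduct, smul_dotProduct, smul_eq_mul, dotProduct_comm v u] at hpv ⊢
  linear_combination (-(u ⬝ᵥ v) * (u ⬝ᵥ x) + u ⬝ᵥ u * (v ⬝ᵥ x)) * hpv

theorem gramDet_mul_dotProduct_self_of_mem_span_pair {u v p : ι → R}
    (hp : p ∈ Submodule.span R {u, v}) (hpv : p ⬝ᵥ v = 0) :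
    gramDet u v * (p ⬝ᵥ p) = v ⬝ᵥ v * (p ⬝ᵥ u) ^ 2 := by
  rw [gramDet_mul_dotProduct_of_mem_span_pair hp hpv, dotProduct_comm v p, hpv,
    dotProduct_comm u p]
  ring

end CommRing

section LinearOrderedRing

variable [Ring R] [LinearOrder R] [IsStrictOrderedRing R]

theorem dotProduct_self_nonneg (v : ι → R) : 0 ≤ v ⬝ᵥ v :=
  Finset.sum_nonneg fun i _ => mul_self_nonneg (v i)

theorem dotProduct_self_pos {v : ι → R} (hv : v ≠ 0) : 0 < v ⬝ᵥ v :=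
  (dotProduct_self_nonneg v).lt_of_ne' (dotProduct_self_eq_zero.not.mpr hv)

end LinearOrderedRing

section LinearOrderedCommRing

variable [CommRing R] [LinearOrder R] [IsStrictOrderedRing R]

theorem gramDet_nonneg (u v : ι → R) : 0 ≤ gramDet u v := by
  simpa only [gramDet, dotProduct, ← sq, sub_nonneg]
    using Finset.sum_mul_sq_le_sq_mul_sq Finset.univ u v

theorem gramDet_pos {u v : ι → R} (h : LinearIndependent R ![u, v]) : 0 < gramDet u v := by
  have hv : 0 < v ⬝ᵥ v := dotProduct_self_pos (by simpa using h.ne_zero 1)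
  have hq : (v ⬝ᵥ v) • u - (u ⬝ᵥ v) • v ≠ 0 := fun h0 =>
    hv.ne' (LinearIndependent.pair_iff.mp h _ _ (by rwa [neg_smul, ← sub_eq_add_neg])).1
  have hqq : ((v ⬝ᵥ v) • u - (u ⬝ᵥ v) • v) ⬝ᵥ ((v ⬝ᵥ v) • u - (u ⬝ᵥ v) • v)
      = v ⬝ᵥ v * gramDet u v := by
    simp only [gramDet, sub_dotProduct, dotProduct_sub, smul_dotProduct, dotProduct_smul,
      smul_eq_mul, dotProduct_comm v u]
    ring
  exact (mul_pos_iff_of_pos_left hv).mp (hqq ▸ dotProduct_self_pos hq)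

end LinearOrderedCommRing

end GramDet

section Plane

variable {ι : Type*} [Fintype ι] {u v p w : ι → ℝ}

theorem abs_dotProduct_div_sqrt_mul_sqrt_le_one (x y : ι → ℝ) :
    |x ⬝ᵥ y / (√(x ⬝ᵥ x) * √(y ⬝ᵥ y))| ≤ 1 := by
  rw [abs_div, abs_of_nonneg (mul_nonneg (Real.sqrt_nonneg _) (Real.sqrt_nonneg _)),
    ← Real.sqrt_mul (dotProduct_self_nonneg x)]
  exact div_le_one_of_le₀ (Real.abs_le_sqrt (sub_nonneg.mp (gramDet_nonneg x y)))
    (Real.sqrt_nonneg _)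

theorem sqrt_gramDet_eq_sqrt_mul_dotProduct (hp : p ∈ Submodule.span ℝ {u, v})
    (hpv : p ⬝ᵥ v = 0) (hpp : p ⬝ᵥ p = 1) (hpu : 0 ≤ p ⬝ᵥ u) :
    √(gramDet u v) = √(v ⬝ᵥ v) * (p ⬝ᵥ u) := by
  have h := gramDet_mul_dotProduct_self_of_mem_span_pair hp hpv
  rw [hpp, mul_one] at h
  rw [h, Real.sqrt_mul (dotProduct_self_nonneg v), Real.sqrt_sq hpu]

theorem dotProduct_mul_dotProduct_mul_sqrt_eq_gramDet (hp : p ∈ Submodule.span ℝ {u, v})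
    (hpv : p ⬝ᵥ v = 0) (hpp : p ⬝ᵥ p = 1) (hpu : 0 ≤ p ⬝ᵥ u)
    (hw : w ∈ Submodule.span ℝ {u, v}) (hwv : w ⬝ᵥ (u + v) = 0) (hww : w ⬝ᵥ w = 1)
    (hwu : 0 ≤ w ⬝ᵥ u) :
    w ⬝ᵥ u * p ⬝ᵥ u * (√((u + v) ⬝ᵥ (u + v)) * √(v ⬝ᵥ v)) = gramDet u v := by
  have hp' := sqrt_gramDet_eq_sqrt_mul_dotProduct hp hpv hpp hpu
  have hw' := sqrt_gramDet_eq_sqrt_mul_dotProduct (Submodule.mem_span_pair_self_add hw) hwv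
    hww hwu
  rw [gramDet_add_right] at hw'
  linear_combination (-(√(v ⬝ᵥ v) * p ⬝ᵥ u)) * hw' - √(gramDet u v) * hp'
    + Real.mul_self_sqrt (gramDet_nonneg u v)

theorem dotProduct_mul_sqrt_mul_sqrt_eq (huv : LinearIndependent ℝ ![u, v])
    (hp : p ∈ Submodule.span ℝ {u, v}) (hpv : p ⬝ᵥ v = 0) (hpp : p ⬝ᵥ p = 1)
    (hpu : 0 ≤ p ⬝ᵥ u) (hw : w ∈ Submodule.span ℝ {u, v}) (hwv : w ⬝ᵥ (u + v) = 0)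
    (hww : w ⬝ᵥ w = 1) (hwu : 0 ≤ w ⬝ᵥ u) :
    p ⬝ᵥ w * (√((u + v) ⬝ᵥ (u + v)) * √(v ⬝ᵥ v)) = (u + v) ⬝ᵥ v := by
  have hk := dotProduct_mul_dotProduct_mul_sqrt_eq_gramDet hp hpv hpp hpu hw hwv hww hwu
  have hm := gramDet_mul_dotProduct_of_mem_span_pair hp hpv w
  have hwv' : v ⬝ᵥ w = -(w ⬝ᵥ u) := by
    rw [dotProduct_add] at hwv
    linear_combination dotProduct_comm v w + hwv
  rw [hwv', dotProduct_comm u w] at hm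
  rw [add_dotProduct u v v]
  refine mul_left_cancel₀ (gramDet_pos huv).ne' ?_
  linear_combination (√((u + v) ⬝ᵥ (u + v)) * √(v ⬝ᵥ v)) * hm + (u ⬝ᵥ v + v ⬝ᵥ v) * hk

end Plane

theorem dot_eq_dotProduct (x y : Fin 3 → ℝ) : dot x y = x ⬝ᵥ y := rfl

theorem hPS_eq_of_dot_eq_zero (lam mu A B : ℝ) {ξ1 ξ2 w p : Fin 3 → ℝ}
    (hp2 : dot p ξ2 = 0) (hwS : dot w (ξ1 + ξ2) = 0) :
    hPS lam mu A B ξ1 ξ2 w p =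
      ((lam + B) * dot ξ1 ξ1 * (dot ξ1 ξ2 + dot ξ2 ξ2)
          + (2 * mu + A / 2) * dot ξ1 ξ2 * (dot ξ1 ξ1 + dot ξ1 ξ2)) * dot p w
        + (mu * (2 * dot ξ1 ξ2 + 2 * dot ξ2 ξ2 - dot ξ1 ξ1)
          + A / 2 * (dot ξ1 ξ2 + dot ξ2 ξ2 - dot ξ1 ξ1) - B * dot ξ1 ξ1)
          * (dot w ξ1 * dot p ξ1) := by
  simp only [hPS, dot_eq_dotProduct, dotProduct_add, dotProduct_comm ξ1 p, dotProduct_comm ξ1 w,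
    dotProduct_comm w p, dotProduct_comm ξ2 w, dotProduct_comm ξ2 ξ1] at hp2 hwS ⊢
  rw [eq_neg_of_add_eq_zero_right hwS, hp2]
  ring

/-- `a, b, c = |ξ¹|², ξ¹·ξ², |ξ²|²`, `r = |ξ²|`, `s = |ξ^S|`, `m = p·w`, `k = (w·ξ¹)(p·ξ¹)`. -/
theorem hPS_reduced_eq {lam mu A B a b c r s m k : ℝ} (hsr : s * r ≠ 0)
    (hr2 : r ^ 2 = c) (hs2 : s ^ 2 = a + 2 * b + c) (hm : m * (s * r) = b + c)
    (hk : k * (s * r) = a * c - b ^ 2) :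
    ((lam + B) * a * (b + c) + (2 * mu + A / 2) * b * (a + b)) * m
        + (mu * (2 * b + 2 * c - a) + A / 2 * (b + c - a) - B * a) * k =
      a * r * s * ((lam + 2 * mu + B + A / 2) * ((b + c) / (s * r)) ^ 2
        - (mu + B + A / 2) * (1 - ((b + c) / (s * r)) ^ 2)) := by
  obtain ⟨hs, hr⟩ := mul_ne_zero_iff.mp hsr
  rw [← eq_div_iff hsr] at hm hk
  subst hm hk hr2
  obtain rfl : a = s ^ 2 - 2 * b - r ^ 2 := by linear_combination -hs2
  field_simp
  ring

/-- The SH→SH component of the symbol generated by the interaction of a P wave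
and an in-plane polarized S wave. -/
theorem ps_interaction_SH_SH (lam mu A B : ℝ) (ξ1 ξ2 : Fin 3 → ℝ)
    (hind : LinearIndependent ℝ ![ξ1, ξ2]) (p w : Fin 3 → ℝ)
    (hpunit : dot p p = 1)
    (hpspan : p ∈ Submodule.span ℝ ({ξ1, ξ2} : Set (Fin 3 → ℝ)))
    (hp2 : dot p ξ2 = 0) (hpS : 0 ≤ dot p (ξ1 + ξ2))
    (hwunit : dot w w = 1)
    (hwspan : w ∈ Submodule.span ℝ ({ξ1, ξ2} : Set (Fin 3 → ℝ)))
    (hwS : dot w (ξ1 + ξ2) = 0) (hw1 : 0 ≤ dot w ξ1) :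
    hPS lam mu A B ξ1 ξ2 w p =
      dot ξ1 ξ1 * nrm ξ2 * nrm (ξ1 + ξ2) *
        ((lam + 2 * mu + B + A / 2) *
            (Real.cos (Real.arccos (dot (ξ1 + ξ2) ξ2 / (nrm (ξ1 + ξ2) * nrm ξ2)))) ^ 2
          - (mu + B + A / 2) *
            (Real.sin (Real.arccos (dot (ξ1 + ξ2) ξ2 / (nrm (ξ1 + ξ2) * nrm ξ2)))) ^ 2) := by
  rw [hPS_eq_of_dot_eq_zero lam mu A B hp2 hwS]
  simp only [nrm, dot_eq_dotProduct] at *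
  have hp1 : 0 ≤ p ⬝ᵥ ξ1 := by rwa [dotProduct_add, hp2, add_zero] at hpS
  have hk := dotProduct_mul_dotProduct_mul_sqrt_eq_gramDet hpspan hp2 hpunit hp1 hwspan hwS
    hwunit hw1
  have hm := dotProduct_mul_sqrt_mul_sqrt_eq hind hpspan hp2 hpunit hp1 hwspan hwS hwunit hw1
  have hcos := abs_le.mp (abs_dotProduct_div_sqrt_mul_sqrt_le_one (ξ1 + ξ2) ξ2)
  rw [Real.cos_arccos hcos.1 hcos.2, Real.sin_arccos,
    Real.sq_sqrt (sub_nonneg.mpr (sq_le_one_iff_abs_le_one _ |>.mpr (abs_le.mpr hcos)))]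
  rw [add_dotProduct ξ1 ξ2 ξ2] at hm ⊢
  refine hPS_reduced_eq (right_ne_zero_of_mul (hk ▸ (gramDet_pos hind).ne'))
    (Real.sq_sqrt (dotProduct_self_nonneg _)) ?_ hm hk
  rw [Real.sq_sqrt (dotProduct_self_nonneg _)]
  simp only [add_dotProduct, dotProduct_add, dotProduct_comm ξ2 ξ1]
  ring
end
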